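/- If every string in an l-subset L has no two consecutive equal characters, then every string in f(L,i,j) also has no two consecutive equal characters, for any 1 ≤ i < j ≤ l. -/

import Mathlib

def fStr (s : List (Fin 4)) (i j : ℕ) : Set (List (Fin 4)) :=
  { t | ∃ c : Fin 4, c ∉ (s.take j).drop (i - 1) ∧ t = s.take i ++ c :: s.drop (j - 1) }

def fSet (L : Set (List (Fin 4))) (i j : ℕ) : Set (List (Fin 4)) :=
  ⋃ s ∈ L, fStr s i j

def Step (L L' : Set (List (Fin 4))) : Prop :=
  ∃ l i j, (∀ s ∈ L, s.length = l) ∧ 1 ≤ i ∧ i < j ∧ j ≤ l ∧ L' = fSet L i j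

def Derives : Set (List (Fin 4)) → Set (List (Fin 4)) → Prop :=
  Relation.TransGen Step

/-! The inserted letter `c` avoids the whole window `sᵢ … sⱼ`, and both of its new neighbours,
`sᵢ` and `sⱼ`, lie in that window; the two kept pieces are proper as pieces of `s`. -/

namespace List

variable {α : Type*}

theorem IsChain.append_cons {R : α → α → Prop} {l₁ l₂ : List α} {c : α}
    (h₁ : IsChain R l₁) (h₂ : IsChain R l₂)
    (hl : ∀ x ∈ l₁.getLast?, R x c) (hr : ∀ y ∈ l₂.head?, R c y) :
    IsChain R (l₁ ++ c :: l₂) :=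
  h₁.append (h₂.cons hr) (by simpa using hl)

theorem mem_drop_take_of_getElem?_eq {l : List α} {k m n : ℕ} {x : α}
    (hkm : k ≤ m) (hmn : m < n) (hx : l[m]? = some x) : x ∈ (l.take n).drop k := by
  apply mem_of_getElem? (i := m - k)
  rw [getElem?_drop, getElem?_take, if_pos (by omega), Nat.add_sub_cancel' hkm, hx]

theorem getElem?_eq_of_mem_getLast?_take {l : List α} {n : ℕ} {x : α}
    (hn : n ≤ l.length) (hx : x ∈ (l.take n).getLast?) : l[n - 1]? = some x := by
  rw [getLast?_take] at hx
  split_ifs at hx with hn0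
  · simp at hx
  · rw [getElem?_eq_getElem (by omega), Option.some_or] at hx
    rw [getElem?_eq_getElem (by omega)]
    exact hx

end List

theorem isChain_ne_of_mem_fStr {s t : List (Fin 4)} {i j : ℕ} (hs : s.IsChain (· ≠ ·))
    (hij : i < j) (hi : i ≤ s.length) (ht : t ∈ fStr s i j) : t.IsChain (· ≠ ·) := by
  obtain ⟨c, hc, rfl⟩ := ht
  refine (hs.take i).append_cons (hs.drop _) ?_ ?_
  · intro x hx hxc
    have hsx := List.getElem?_eq_of_mem_getLast?_take hi hx
    exact hc (hxc ▸ List.mem_drop_take_of_getElem?_eq le_rfl (by omega) hsx)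
  · intro y hy hcy
    rw [List.head?_drop] at hy
    exact hc (hcy ▸ List.mem_drop_take_of_getElem?_eq (by omega) (by omega) hy)

theorem stmt6_general (L : Set (List (Fin 4))) (l i j : ℕ)
    (hL : ∀ s ∈ L, s.length = l) (hproper : ∀ s ∈ L, List.Chain' (· ≠ ·) s)
    (hij : i < j) (hj : j ≤ l) :
    ∀ t ∈ fSet L i j, List.Chain' (· ≠ ·) t := by
  intro t ht
  simp only [fSet, Set.mem_iUnion] at ht
  obtain ⟨s, hs, hts⟩ := ht
  exact isChain_ne_of_mem_fStr (hproper s hs) hij (by rw [hL s hs]; omega) hts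

theorem stmt6 (L : Set (List (Fin 4))) (l i j : ℕ)
    (hL : ∀ s ∈ L, s.length = l) (hproper : ∀ s ∈ L, List.Chain' (· ≠ ·) s)
    (hi : 1 ≤ i) (hij : i < j) (hj : j ≤ l) :
    ∀ t ∈ fSet L i j, List.Chain' (· ≠ ·) t :=
  stmt6_general L l i j hL hproper hij hj
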